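/- Let n ≥ 1 and let ψ : (Fin n → Fin 2) → ℂ be defined by ψ = ∑_{i<j} R_{i,j}. Let a : Fin n → Fin 4 be such that a(i) ∈ {1, 2} (an X or Y factor) for at least one i. Then |⟨ψ, P_a·ψ⟩| ≤ n³. -/

import Mathlib

open Matrix

/-- The four single-qubit Pauli matrices `I, X, Y, Z`. -/
noncomputable def pauli : Fin 4 → Matrix (Fin 2) (Fin 2) ℂ :=
  ![1, !![0, 1; 1, 0], !![0, -Complex.I; Complex.I, 0], !![1, 0; 0, -1]]

/-- The `n`-qubit Pauli string `P_a = σ_{a 0} ⊗ ⋯ ⊗ σ_{a (n-1)}`. -/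
noncomputable def PauliString {n : ℕ} (a : Fin n → Fin 4) :
    Matrix (Fin n → Fin 2) (Fin n → Fin 2) ℂ :=
  Matrix.of fun x y => ∏ i, pauli (a i) (x i) (y i)

/-- The single-qubit state `|R⟩ = (|0⟩ + e^{iπ/8}|1⟩)/√2`. -/
noncomputable def Rvec : Fin 2 → ℂ :=
  ![1 / (Real.sqrt 2 : ℂ), Complex.exp (Real.pi * Complex.I / 8) / (Real.sqrt 2 : ℂ)]

/-- The product state with `|R⟩` in positions `i` and `j` and `|0⟩` elsewhere. -/
noncomputable def Rij {n : ℕ} (i j : Fin n) : (Fin n → Fin 2) → ℂ :=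
  fun x => Rvec (x i) * Rvec (x j) *
    ∏ k, if k = i ∨ k = j then 1 else (if x k = 0 then 1 else 0)

/-- The unnormalized state `ψ = ∑_{i<j} R_{i,j}`. -/
noncomputable def psiM {n : ℕ} : (Fin n → Fin 2) → ℂ :=
  fun x => ∑ i, ∑ j, if i < j then Rij i j x else 0
/-!
Expanding `ψ = ∑_{i<j} R_{i,j}` bilinearly, `⟨ψ, P_a ψ⟩` is a sum of `#pairs²` matrix elements
`⟨R_p, P_a R_q⟩` between product states. Each factorises over the qubits into single-qubit matrix
elements of a unitary Pauli matrix between unit vectors, so has modulus at most `1`; and it vanishes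
unless the site `i₀` carrying an `X` or `Y` lies in `p` or in `q`, because `⟨0|X|0⟩ = ⟨0|Y|0⟩ = 0`.
At most `2 · #pairs · n ≤ n³` terms survive, since `2 · #pairs ≤ n²` and at most `n` pairs
contain `i₀`.
-/
open Finset

theorem norm_star_dotProduct_mulVec_le_of_mem_unitaryGroup {ι : Type*} [Fintype ι]
    [DecidableEq ι] {U : Matrix ι ι ℂ} (hU : U ∈ unitaryGroup ι ℂ) (u w : ι → ℂ) :
    ‖star u ⬝ᵥ (U *ᵥ w)‖ ≤ ‖WithLp.toLp 2 u‖ * ‖WithLp.toLp 2 w‖ :=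
  calc ‖star u ⬝ᵥ (U *ᵥ w)‖
      = ‖inner ℂ (WithLp.toLp 2 u) (toEuclideanCLM (n := ι) (𝕜 := ℂ) U (WithLp.toLp 2 w))‖ := by
        rw [toEuclideanCLM_toLp, EuclideanSpace.inner_toLp_toLp, dotProduct_comm]
    _ ≤ _ := norm_inner_le_norm _ _
    _ = _ := by rw [ContinuousLinearMap.norm_map_of_mem_unitary (Unitary.map_mem _ hU)]

def prodState {ι : Type*} [Fintype ι] (v : ι → Fin 2 → ℂ) : (ι → Fin 2) → ℂ :=
  fun x => ∏ m, v m (x m)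

theorem pauli_mem_unitaryGroup (k : Fin 4) : pauli k ∈ unitaryGroup (Fin 2) ℂ := by
  rw [mem_unitaryGroup_iff]
  fin_cases k <;> ext i j <;> fin_cases i <;> fin_cases j <;>
    simp [pauli, mul_apply, Fin.sum_univ_two, one_apply]

theorem pauli_apply_zero_zero {k : Fin 4} (hk : k = 1 ∨ k = 2) : pauli k 0 0 = 0 := by
  rcases hk with rfl | rfl <;> simp [pauli]

theorem norm_toLp_Rvec : ‖WithLp.toLp 2 Rvec‖ = 1 := by
  rw [EuclideanSpace.norm_eq, Fin.sum_univ_two]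
  simp [Rvec, Complex.norm_exp]
  norm_num

section Qubits

variable {n : ℕ}

theorem star_prodState_dotProduct_pauliString_mulVec (a : Fin n → Fin 4)
    (u w : Fin n → Fin 2 → ℂ) :
    star (prodState u) ⬝ᵥ (PauliString a *ᵥ prodState w)
      = ∏ m, star (u m) ⬝ᵥ (pauli (a m) *ᵥ w m) := by
  simp only [dotProduct, mulVec, Pi.star_apply, prodState, PauliString, of_apply, star_prod,
    Finset.mul_sum, ← Finset.prod_mul_distrib]
  rw [Fintype.prod_sum]
  refine Fintype.sum_congr _ _ fun x => ?_
  rw [Fintype.prod_sum]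

theorem norm_star_prodState_dotProduct_pauliString_mulVec_le_one (a : Fin n → Fin 4)
    {u w : Fin n → Fin 2 → ℂ} (hu : ∀ m, ‖WithLp.toLp 2 (u m)‖ = 1)
    (hw : ∀ m, ‖WithLp.toLp 2 (w m)‖ = 1) :
    ‖star (prodState u) ⬝ᵥ (PauliString a *ᵥ prodState w)‖ ≤ 1 := by
  rw [star_prodState_dotProduct_pauliString_mulVec, norm_prod]
  refine Finset.prod_le_one (fun m _ => norm_nonneg _) fun m _ => ?_
  simpa [hu m, hw m] using
    norm_star_dotProduct_mulVec_le_of_mem_unitaryGroup (pauli_mem_unitaryGroup (a m)) (u m) (w m)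

theorem star_prodState_dotProduct_pauliString_mulVec_eq_zero {a : Fin n → Fin 4}
    {u w : Fin n → Fin 2 → ℂ} {m : Fin n} (ha : a m = 1 ∨ a m = 2)
    (hu : u m = Pi.single 0 1) (hw : w m = Pi.single 0 1) :
    star (prodState u) ⬝ᵥ (PauliString a *ᵥ prodState w) = 0 := by
  rw [star_prodState_dotProduct_pauliString_mulVec]
  refine Finset.prod_eq_zero (Finset.mem_univ m) ?_
  simp [hu, hw, pauli_apply_zero_zero ha]

noncomputable def pairSite (i j m : Fin n) : Fin 2 → ℂ :=
  if m = i ∨ m = j then Rvec else Pi.single 0 1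

theorem pairSite_eq_single {i j m : Fin n} (h : ¬(i = m ∨ j = m)) :
    pairSite i j m = Pi.single 0 1 :=
  if_neg fun hm => h (hm.imp Eq.symm Eq.symm)

theorem norm_toLp_pairSite (i j m : Fin n) : ‖WithLp.toLp 2 (pairSite i j m)‖ = 1 := by
  unfold pairSite
  split
  · exact norm_toLp_Rvec
  · rw [PiLp.toLp_single, PiLp.norm_single, norm_one]

theorem Rij_eq_prodState {i j : Fin n} (hij : i ≠ j) :
    Rij i j = prodState (pairSite i j) := by
  ext x
  have hcompl : ∀ m ∈ ({i, j} : Finset (Fin n))ᶜ, ¬(m = i ∨ m = j) := by simp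
  rw [Rij, prodState, ← prod_mul_prod_compl {i, j}, ← prod_mul_prod_compl {i, j}, prod_pair hij,
    prod_pair hij]
  simp only [pairSite, true_or, or_true, if_true, mul_one, one_mul]
  congr 1
  refine Finset.prod_congr rfl fun m hm => ?_
  simp only [if_neg (hcompl m hm), Pi.single_apply]

theorem psiM_eq_sum :
    (psiM : (Fin n → Fin 2) → ℂ) = ∑ p ∈ {p : Fin n × Fin n | p.1 < p.2}, Rij p.1 p.2 := by
  ext x
  rw [Finset.sum_apply, sum_filter, Fintype.sum_prod_type]
  rfl

end Qubits

section PairCounting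

variable {α : Type*} [LinearOrder α] [Fintype α]

theorem two_mul_card_filter_lt_le : 2 * #{p : α × α | p.1 < p.2} ≤ Fintype.card α ^ 2 := by
  have hswap : #{p : α × α | p.2 < p.1} = #{p : α × α | p.1 < p.2} :=
    card_equiv (Equiv.prodComm α α) (by simp)
  calc 2 * #{p : α × α | p.1 < p.2} = #{p : α × α | p.1 < p.2} + #{p : α × α | p.2 < p.1} := by
        omega
    _ = #(({p | p.1 < p.2} : Finset (α × α)) ∪ ({p | p.2 < p.1} : Finset (α × α))) :=
        (card_union_of_disjoint (disjoint_filter.2 fun p _ h => h.asymm)).symm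
    _ ≤ Fintype.card (α × α) := card_le_univ _
    _ = Fintype.card α ^ 2 := by rw [Fintype.card_prod, sq]

theorem card_filter_lt_and_eq_le (i : α) :
    #{p : α × α | p.1 < p.2 ∧ (p.1 = i ∨ p.2 = i)} ≤ Fintype.card α :=
  calc #{p : α × α | p.1 < p.2 ∧ (p.1 = i ∨ p.2 = i)}
      ≤ #(univ.image fun j => (min i j, max i j)) := by
        refine card_le_card fun p hp => ?_
        obtain ⟨hlt, rfl | rfl⟩ := (mem_filter.1 hp).2
        · exact mem_image.2 ⟨p.2, mem_univ _, by simp [hlt.le]⟩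
        · exact mem_image.2 ⟨p.1, mem_univ _, by simp [hlt.le]⟩
    _ ≤ Fintype.card α := card_image_le

end PairCounting

theorem norm_sum_sum_le_of_norm_le_one_of_eq_zero {β E : Type*} [SeminormedAddCommGroup E]
    (s : Finset β) (A : β → Prop) [DecidablePred A] {f : β → β → E}
    (hf : ∀ p ∈ s, ∀ q ∈ s, ‖f p q‖ ≤ 1) (hf₀ : ∀ p ∈ s, ∀ q ∈ s, ¬A p → ¬A q → f p q = 0) :
    ‖∑ p ∈ s, ∑ q ∈ s, f p q‖ ≤ 2 * #s * #{p ∈ s | A p} := by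
  have hpq : ∀ p ∈ s, ∀ q ∈ s, ‖f p q‖ ≤ (if A p then 1 else 0) + (if A q then 1 else 0) := by
    intro p hp q hq
    by_cases h : A p ∨ A q
    · have := hf p hp q hq
      rcases h with h | h <;> split_ifs <;> linarith
    · obtain ⟨hp₀, hq₀⟩ := not_or.1 h
      simp [hp₀, hq₀, hf₀ p hp q hq hp₀ hq₀]
  calc ‖∑ p ∈ s, ∑ q ∈ s, f p q‖ ≤ ∑ p ∈ s, ∑ q ∈ s, ‖f p q‖ :=
        (norm_sum_le _ _).trans (sum_le_sum fun p _ => norm_sum_le _ _)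
    _ ≤ ∑ p ∈ s, ∑ q ∈ s, ((if A p then 1 else 0) + (if A q then 1 else 0)) :=
        sum_le_sum fun p hp => sum_le_sum fun q hq => hpq p hp q hq
    _ = 2 * #s * #{p ∈ s | A p} := by
        simp only [sum_add_distrib, sum_const, nsmul_eq_mul, ← mul_sum, sum_boole]
        ring

theorem psiM_pauli_expectation_bound_general
    {n : ℕ} (a : Fin n → Fin 4)
    (ha : ∃ i, a i = 1 ∨ a i = 2) :
    ‖∑ x, (starRingEnd ℂ) (psiM x) * ((PauliString a).mulVec psiM x)‖
      ≤ (n : ℝ) ^ 3 := by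
  obtain ⟨i₀, hi₀⟩ := ha
  set P : Finset (Fin n × Fin n) := {p | p.1 < p.2}
  have hP : ∀ p ∈ P, p.1 ≠ p.2 := fun p hp => (mem_filter.1 hp).2.ne
  have hexp : ∑ x, (starRingEnd ℂ) (psiM x) * ((PauliString a).mulVec psiM x)
      = ∑ p ∈ P, ∑ q ∈ P, star (Rij p.1 p.2) ⬝ᵥ (PauliString a *ᵥ Rij q.1 q.2) := by
    change star psiM ⬝ᵥ (PauliString a *ᵥ psiM) = _
    rw [psiM_eq_sum, star_sum, mulVec_sum, sum_dotProduct]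
    simp only [dotProduct_sum]
    rfl
  rw [hexp]
  refine (norm_sum_sum_le_of_norm_le_one_of_eq_zero P (fun p => p.1 = i₀ ∨ p.2 = i₀)
    (fun p hp q hq => ?_) (fun p hp q hq hp₀ hq₀ => ?_)).trans ?_
  · rw [Rij_eq_prodState (hP p hp), Rij_eq_prodState (hP q hq)]
    exact norm_star_prodState_dotProduct_pauliString_mulVec_le_one a
      (norm_toLp_pairSite _ _) (norm_toLp_pairSite _ _)
  · rw [Rij_eq_prodState (hP p hp), Rij_eq_prodState (hP q hq)]
    exact star_prodState_dotProduct_pauliString_mulVec_eq_zero hi₀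
      (pairSite_eq_single hp₀) (pairSite_eq_single hq₀)
  · have hcount : 2 * #P * #{p ∈ P | p.1 = i₀ ∨ p.2 = i₀} ≤ n ^ 2 * n := by
      have := Nat.mul_le_mul (two_mul_card_filter_lt_le (α := Fin n)) (card_filter_lt_and_eq_le i₀)
      rwa [Fintype.card_fin, ← filter_filter] at this
    rw [pow_succ]
    exact_mod_cast hcount

/-- if the Pauli string `P_a` contains at least one `X` or `Y`
factor, then `|⟨ψ, P_a ψ⟩| ≤ n³` for `ψ = ∑_{i<j} R_{i,j}`. -/
theorem psiM_pauli_expectation_bound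
    {n : ℕ} (hn : 1 ≤ n) (a : Fin n → Fin 4)
    (ha : ∃ i, a i = 1 ∨ a i = 2) :
    ‖∑ x, (starRingEnd ℂ) (psiM x) * ((PauliString a).mulVec psiM x)‖
      ≤ (n : ℝ) ^ 3 :=
  psiM_pauli_expectation_bound_general a ha
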